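/- arXiv:2302.00088 — 2 statements merged into one kernel-verified Lean document; each statement's English description precedes it below -/
import Mathlib

section
/- Let X be a real random variable, let c be a nonzero real constant, and let κ, n > 0 be constants such that P(|X − c| ≥ ε) ≤ exp(−κ·n·ε²) for every ε > 0. Then for every ε with 0 < ε < 1, P(|X⁻¹ − c⁻¹| ≥ ε) ≤ 2·exp(−n·κ·ε²·c²·min(c², 1)/4), where the reciprocal is taken with the convention 0⁻¹ = 0. -/
open MeasureTheory

/-- **Concentration of Scalar Inverses.** If
`P(|X − c| ≥ ε) ≤ exp(−κ n ε²)` with `c ≠ 0`, then for `0 < ε < 1`,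
`P(|X⁻¹ − c⁻¹| ≥ ε) ≤ 2 exp(−n κ ε² c² min(c², 1) / 4)`, where the reciprocal follows
the convention `(0:ℝ)⁻¹ = 0`. -/
theorem concentration_of_scalar_inverses
    {Ω : Type*} [MeasurableSpace Ω] (P : Measure Ω) [IsProbabilityMeasure P]
    (X : Ω → ℝ) (hX : Measurable X)
    (c : ℝ) (hc : c ≠ 0)
    (κ n : ℝ) (hκ : 0 < κ) (hn : 0 < n)
    (hconc : ∀ ε : ℝ, 0 < ε →
      P {ω | ε ≤ |X ω - c|} ≤ ENNReal.ofReal (Real.exp (-(κ * n * ε ^ 2)))) :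
    ∀ ε : ℝ, 0 < ε → ε < 1 →
      P {ω | ε ≤ |(X ω)⁻¹ - c⁻¹|}
        ≤ ENNReal.ofReal (2 * Real.exp (-(n * κ * ε ^ 2 * c ^ 2 * min (c ^ 2) 1 / 4))) := by
  intro ε hε hε1
  have hcabs : (0:ℝ) < |c| := abs_pos.mpr hc
  have hc2 : (0:ℝ) < c ^ 2 := by positivity
  have hA := hconc (|c| / 2) (by positivity)
  have hB := hconc (ε * c ^ 2 / 2) (by positivity)
  have hsub : {ω | ε ≤ |(X ω)⁻¹ - c⁻¹|} ⊆
      {ω | |c| / 2 ≤ |X ω - c|} ∪ {ω | ε * c ^ 2 / 2 ≤ |X ω - c|} := by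
    intro ω hω
    simp only [Set.mem_setOf_eq, Set.mem_union] at hω ⊢
    by_cases h : |c| / 2 ≤ |X ω - c|
    · exact Or.inl h
    · right
      push_neg at h
      have hx : |c| / 2 < |X ω| := by
        have h1 := abs_sub_abs_le_abs_sub c (X ω)
        rw [abs_sub_comm] at h1
        linarith
      have hx0 : X ω ≠ 0 := by
        intro h0
        rw [h0, abs_zero] at hx
        linarith
      have key : |(X ω)⁻¹ - c⁻¹| = |X ω - c| / (|X ω| * |c|) := by
        rw [inv_sub_inv hx0 hc, abs_div, abs_mul, abs_sub_comm]
      rw [key] at hω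
      have habsmul : |c| * |c| = c ^ 2 := by
        rw [abs_mul_abs_self]; ring
      have hden0 : (0:ℝ) < |X ω| * |c| := by positivity
      rw [le_div_iff₀ hden0] at hω
      have h2 : c ^ 2 / 2 < |X ω| * |c| := by
        nlinarith [mul_lt_mul_of_pos_right hx hcabs]
      nlinarith [mul_le_mul_of_nonneg_left h2.le hε.le]
  have hm1 : min (c ^ 2) 1 ≤ 1 := min_le_right _ _
  have hm2 : min (c ^ 2) 1 ≤ c ^ 2 := min_le_left _ _
  have hm0 : (0:ℝ) < min (c ^ 2) 1 := lt_min hc2 one_pos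
  calc P {ω | ε ≤ |(X ω)⁻¹ - c⁻¹|}
      ≤ P ({ω | |c| / 2 ≤ |X ω - c|} ∪ {ω | ε * c ^ 2 / 2 ≤ |X ω - c|}) :=
        measure_mono hsub
    _ ≤ P {ω | |c| / 2 ≤ |X ω - c|} + P {ω | ε * c ^ 2 / 2 ≤ |X ω - c|} :=
        measure_union_le _ _
    _ ≤ ENNReal.ofReal (Real.exp (-(κ * n * (|c| / 2) ^ 2)))
        + ENNReal.ofReal (Real.exp (-(κ * n * (ε * c ^ 2 / 2) ^ 2))) := add_le_add hA hB
    _ ≤ ENNReal.ofReal (2 * Real.exp (-(n * κ * ε ^ 2 * c ^ 2 * min (c ^ 2) 1 / 4))) := by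
        rw [← ENNReal.ofReal_add (by positivity) (by positivity)]
        apply ENNReal.ofReal_le_ofReal
        have e1 : Real.exp (-(κ * n * (|c| / 2) ^ 2))
            ≤ Real.exp (-(n * κ * ε ^ 2 * c ^ 2 * min (c ^ 2) 1 / 4)) := by
          apply Real.exp_le_exp.mpr
          have hsq : (|c| / 2) ^ 2 = c ^ 2 / 4 := by
            rw [div_pow, sq_abs]; norm_num
          rw [hsq]
          have hem : ε ^ 2 * min (c ^ 2) 1 ≤ 1 := by nlinarith [sq_nonneg ε]
          nlinarith [mul_le_mul_of_nonneg_left hem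
            (le_of_lt (mul_pos (mul_pos hκ hn) hc2))]
        have e2 : Real.exp (-(κ * n * (ε * c ^ 2 / 2) ^ 2))
            ≤ Real.exp (-(n * κ * ε ^ 2 * c ^ 2 * min (c ^ 2) 1 / 4)) := by
          apply Real.exp_le_exp.mpr
          nlinarith [mul_pos hκ hn, sq_nonneg ε, mul_pos (mul_pos hκ hn) (mul_pos (mul_pos hε hε) hc2)]
        linarith
end

section
/- Let n ≥ 1 and let Z₁,…,Z_n be i.i.d. standard Gaussian random variables (mean 0, variance 1). Then for every ε with 0 ≤ ε ≤ 1, P(|n⁻¹·Σ_{i=1}^n Zᵢ² − 1| ≥ ε) ≤ 2·exp(−n·ε²/8). -/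
open MeasureTheory ProbabilityTheory Real

/-!
Chernoff's method. For a standard Gaussian `Z` and `t < 1/2`, `E[exp (t Z²)] = (1 - 2t)^(-1/2)`,
so by independence the sum `S = Σ Zᵢ²` has moment generating function `(1 - 2t)^(-n/2)`.
Markov's inequality for `exp (t S)` with `t = ε/4` (upper tail) and `t = -ε/4` (lower tail)
reduces each tail to a one-variable inequality, `1 ≤ (1 - x) exp (x + x²)` on `[0, 1/2]` resp.
`exp (x - x²) ≤ 1 + x` on `[0, ∞)` at `x = ε/2`, which gives `exp (-n ε²/8)` for each tail.
-/

lemma gaussianPDFReal_mul_exp_mul_sq (t x : ℝ) :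
    gaussianPDFReal 0 1 x * exp (t * x ^ 2) = (√(2 * π))⁻¹ * exp (-(1 / 2 - t) * x ^ 2) := by
  simp only [gaussianPDFReal, NNReal.coe_one, mul_one, sub_zero]
  rw [mul_assoc, ← exp_add]
  ring_nf

lemma integrable_exp_mul_sq_gaussianReal {t : ℝ} (ht : t < 1 / 2) :
    Integrable (fun x ↦ exp (t * x ^ 2)) (gaussianReal 0 1) := by
  rw [gaussianReal_of_var_ne_zero 0 one_ne_zero, gaussianPDF_def,
    integrable_withDensity_iff (measurable_gaussianPDFReal 0 1).ennreal_ofReal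
      (ae_of_all _ fun _ ↦ ENNReal.ofReal_lt_top)]
  simp_rw [ENNReal.toReal_ofReal (gaussianPDFReal_nonneg 0 1 _), mul_comm _ (gaussianPDFReal 0 1 _),
    gaussianPDFReal_mul_exp_mul_sq]
  exact (integrable_exp_neg_mul_sq (by linarith)).const_mul _

lemma integral_exp_mul_sq_gaussianReal {t : ℝ} (ht : t < 1 / 2) :
    ∫ x, exp (t * x ^ 2) ∂gaussianReal 0 1 = (√(1 - 2 * t))⁻¹ := by
  simp_rw [integral_gaussianReal_eq_integral_smul one_ne_zero, smul_eq_mul,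
    gaussianPDFReal_mul_exp_mul_sq, integral_const_mul, integral_gaussian,
    ← sqrt_inv, ← sqrt_mul (inv_nonneg.mpr (by positivity : (0 : ℝ) ≤ 2 * π))]
  congr 1
  have : (1 : ℝ) - 2 * t ≠ 0 := by linarith
  field_simp

lemma one_le_one_sub_mul_exp_add_sq {x : ℝ} (h0 : 0 ≤ x) (h1 : x ≤ 1 / 2) :
    1 ≤ (1 - x) * exp (x + x ^ 2) := by
  have := quadratic_le_exp_of_nonneg (by positivity : 0 ≤ x + x ^ 2)
  nlinarith [mul_le_mul_of_nonneg_left this (by linarith : 0 ≤ 1 - x), pow_nonneg h0 3,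
    pow_nonneg h0 4]

lemma exp_sub_sq_le_one_add {x : ℝ} (h0 : 0 ≤ x) :
    exp (x - x ^ 2) ≤ 1 + x := by
  have hpos : 0 < 1 - (x - x ^ 2) := by nlinarith [sq_nonneg (x - 1 / 2)]
  have hprod : exp (x - x ^ 2) * (1 - (x - x ^ 2)) ≤ 1 := by
    calc exp (x - x ^ 2) * (1 - (x - x ^ 2)) ≤ exp (x - x ^ 2) * exp (-(x - x ^ 2)) := by
          gcongr; linarith [add_one_le_exp (-(x - x ^ 2))]
      _ = 1 := by rw [← exp_add, add_neg_cancel, exp_zero]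
  have hcube : 1 ≤ (1 + x) * (1 - (x - x ^ 2)) := by nlinarith [pow_nonneg h0 3]
  exact le_of_mul_le_mul_right (hprod.trans hcube) hpos

lemma inv_sqrt_one_sub_le_exp {x : ℝ} (h0 : 0 ≤ x) (h1 : x ≤ 1 / 2) :
    (√(1 - x))⁻¹ ≤ exp ((x + x ^ 2) / 2) := by
  rw [inv_le_iff_one_le_mul₀' (sqrt_pos.mpr (by linarith)), exp_half, ← sqrt_mul (by linarith),
    one_le_sqrt]
  exact one_le_one_sub_mul_exp_add_sq h0 h1

lemma inv_sqrt_one_add_le_exp {x : ℝ} (h0 : 0 ≤ x) :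
    (√(1 + x))⁻¹ ≤ exp (-((x - x ^ 2) / 2)) := by
  rw [exp_neg, exp_half]
  gcongr
  exact exp_sub_sq_le_one_add h0

lemma le_mul_one_add_or_le_mul_one_sub_of_le_abs {a s ε : ℝ} (ha : 0 ≤ a)
    (h : ε ≤ |a⁻¹ * s - 1|) : a * (1 + ε) ≤ s ∨ s ≤ a * (1 - ε) := by
  rcases ha.eq_or_lt with rfl | ha
  · simpa using le_total 0 s
  rcases le_abs'.mp h with h | h
  · exact .inr ((inv_mul_le_iff₀ ha).mp (by linarith))
  · exact .inl ((le_inv_mul_iff₀ ha).mp (by linarith))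

namespace ProbabilityTheory

variable {Ω ι : Type*} [MeasurableSpace Ω] {P : Measure Ω} {t : ℝ}

lemma integrable_exp_mul_sq_of_map_eq_gaussianReal {Y : Ω → ℝ} (hY : Measurable Y)
    (hlaw : P.map Y = gaussianReal 0 1) (ht : t < 1 / 2) :
    Integrable (fun ω ↦ exp (t * Y ω ^ 2)) P := by
  have h := integrable_exp_mul_sq_gaussianReal ht
  rwa [← hlaw, integrable_map_measure (by fun_prop) hY.aemeasurable] at h

lemma mgf_sq_of_map_eq_gaussianReal {Y : Ω → ℝ} (hY : Measurable Y)
    (hlaw : P.map Y = gaussianReal 0 1) (ht : t < 1 / 2) :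
    mgf (fun ω ↦ Y ω ^ 2) P t = (√(1 - 2 * t))⁻¹ := by
  rw [← integral_exp_mul_sq_gaussianReal ht, ← hlaw,
    integral_map hY.aemeasurable (by fun_prop)]
  rfl

variable [Fintype ι] {Z : ι → Ω → ℝ}

lemma iIndepFun.integrable_exp_mul_sum_sq (hindep : iIndepFun Z P)
    (hZ : ∀ i, Measurable (Z i)) (hlaw : ∀ i, P.map (Z i) = gaussianReal 0 1) (ht : t < 1 / 2) :
    Integrable (fun ω ↦ exp (t * ∑ i, Z i ω ^ 2)) P := by
  have := hindep.isProbabilityMeasure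
  have hsq : iIndepFun (fun i ω ↦ Z i ω ^ 2) P :=
    hindep.comp (fun _ x ↦ x ^ 2) fun _ ↦ by fun_prop
  simpa using hsq.integrable_exp_mul_sum (fun i ↦ (hZ i).pow_const 2) (s := .univ)
    fun i _ ↦ integrable_exp_mul_sq_of_map_eq_gaussianReal (hZ i) (hlaw i) ht

lemma iIndepFun.mgf_sum_sq (hindep : iIndepFun Z P)
    (hZ : ∀ i, Measurable (Z i)) (hlaw : ∀ i, P.map (Z i) = gaussianReal 0 1) (ht : t < 1 / 2) :
    mgf (fun ω ↦ ∑ i, Z i ω ^ 2) P t = (√(1 - 2 * t))⁻¹ ^ Fintype.card ι := by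
  have hsq : iIndepFun (fun i ω ↦ Z i ω ^ 2) P :=
    hindep.comp (fun _ x ↦ x ^ 2) fun _ ↦ by fun_prop
  rw [← Finset.sum_fn, hsq.mgf_sum fun i ↦ (hZ i).pow_const 2]
  simp only [mgf_sq_of_map_eq_gaussianReal (hZ _) (hlaw _) ht, Finset.prod_const, Finset.card_univ]

lemma iIndepFun.measureReal_sum_sq_ge_le (hindep : iIndepFun Z P)
    (hZ : ∀ i, Measurable (Z i)) (hlaw : ∀ i, P.map (Z i) = gaussianReal 0 1)
    {ε : ℝ} (hε0 : 0 ≤ ε) (hε1 : ε ≤ 1) :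
    P.real {ω | Fintype.card ι * (1 + ε) ≤ ∑ i, Z i ω ^ 2}
      ≤ exp (-(Fintype.card ι * ε ^ 2 / 8)) := by
  have := hindep.isProbabilityMeasure
  have ht : ε / 4 < 1 / 2 := by linarith
  calc _ ≤ exp (-(ε / 4) * (Fintype.card ι * (1 + ε)))
        * (√(1 - 2 * (ε / 4)))⁻¹ ^ Fintype.card ι := by
        rw [← hindep.mgf_sum_sq hZ hlaw ht]
        exact measure_ge_le_exp_mul_mgf _ (by positivity)
          (hindep.integrable_exp_mul_sum_sq hZ hlaw ht)
    _ ≤ exp (-(ε / 4) * (Fintype.card ι * (1 + ε)))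
        * exp ((ε / 2 + (ε / 2) ^ 2) / 2) ^ Fintype.card ι := by
        gcongr
        rw [show 1 - 2 * (ε / 4) = 1 - ε / 2 by ring]
        exact inv_sqrt_one_sub_le_exp (by positivity) (by linarith)
    _ = exp (-(Fintype.card ι * ε ^ 2 / 8)) := by
        rw [← exp_nat_mul, ← exp_add]
        congr 1
        ring

lemma iIndepFun.measureReal_sum_sq_le_le (hindep : iIndepFun Z P)
    (hZ : ∀ i, Measurable (Z i)) (hlaw : ∀ i, P.map (Z i) = gaussianReal 0 1)
    {ε : ℝ} (hε0 : 0 ≤ ε) :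
    P.real {ω | ∑ i, Z i ω ^ 2 ≤ Fintype.card ι * (1 - ε)}
      ≤ exp (-(Fintype.card ι * ε ^ 2 / 8)) := by
  have := hindep.isProbabilityMeasure
  have ht : -(ε / 4) < 1 / 2 := by linarith
  calc _ ≤ exp (-(-(ε / 4)) * (Fintype.card ι * (1 - ε)))
        * (√(1 - 2 * -(ε / 4)))⁻¹ ^ Fintype.card ι := by
        rw [← hindep.mgf_sum_sq hZ hlaw ht]
        exact measure_le_le_exp_mul_mgf _ (by linarith)
          (hindep.integrable_exp_mul_sum_sq hZ hlaw ht)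
    _ ≤ exp (-(-(ε / 4)) * (Fintype.card ι * (1 - ε)))
        * exp (-((ε / 2 - (ε / 2) ^ 2) / 2)) ^ Fintype.card ι := by
        gcongr
        rw [show 1 - 2 * -(ε / 4) = 1 + ε / 2 by ring]
        exact inv_sqrt_one_add_le_exp (by positivity)
    _ = exp (-(Fintype.card ι * ε ^ 2 / 8)) := by
        rw [← exp_nat_mul, ← exp_add]
        congr 1
        ring

end ProbabilityTheory

theorem chi_squared_concentration_general
    {Ω : Type*} [MeasurableSpace Ω] (P : Measure Ω) [IsProbabilityMeasure P]
    {n : ℕ}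
    (Z : Fin n → Ω → ℝ) (hZmeas : ∀ i, Measurable (Z i))
    (hindep : iIndepFun Z P)
    (hlaw : ∀ i, Measure.map (Z i) P = gaussianReal 0 1) :
    ∀ ε : ℝ, 0 ≤ ε → ε ≤ 1 →
      P {ω | ε ≤ |(n : ℝ)⁻¹ * ∑ i, Z i ω ^ 2 - 1|}
        ≤ ENNReal.ofReal (2 * Real.exp (-((n : ℝ) * ε ^ 2 / 8))) := by
  intro ε hε0 hε1
  have hsplit : {ω | ε ≤ |(n : ℝ)⁻¹ * ∑ i, Z i ω ^ 2 - 1|}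
      ⊆ {ω | n * (1 + ε) ≤ ∑ i, Z i ω ^ 2} ∪ {ω | ∑ i, Z i ω ^ 2 ≤ n * (1 - ε)} :=
    fun ω hω ↦ le_mul_one_add_or_le_mul_one_sub_of_le_abs n.cast_nonneg hω
  have hupper := hindep.measureReal_sum_sq_ge_le hZmeas hlaw hε0 hε1
  have hlower := hindep.measureReal_sum_sq_le_le hZmeas hlaw hε0
  rw [Fintype.card_fin] at hupper hlower
  rw [← ofReal_measureReal]
  refine ENNReal.ofReal_le_ofReal ?_
  calc _ ≤ P.real (_ ∪ _) := measureReal_mono hsplit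
    _ ≤ _ := measureReal_union_le _ _
    _ ≤ _ := by linarith

/-- **χ²-concentration.** If `Z₁, …, Z_n` are i.i.d. standard Gaussians,
then for every `0 ≤ ε ≤ 1`,
`P(|n⁻¹ Σᵢ Zᵢ² − 1| ≥ ε) ≤ 2 exp(−n ε² / 8)`. -/
theorem chi_squared_concentration
    {Ω : Type*} [MeasurableSpace Ω] (P : Measure Ω) [IsProbabilityMeasure P]
    {n : ℕ} (hn : 1 ≤ n)
    (Z : Fin n → Ω → ℝ) (hZmeas : ∀ i, Measurable (Z i))
    (hindep : iIndepFun Z P)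
    (hlaw : ∀ i, Measure.map (Z i) P = gaussianReal 0 1) :
    ∀ ε : ℝ, 0 ≤ ε → ε ≤ 1 →
      P {ω | ε ≤ |(n : ℝ)⁻¹ * ∑ i, Z i ω ^ 2 - 1|}
        ≤ ENNReal.ofReal (2 * Real.exp (-((n : ℝ) * ε ^ 2 / 8))) :=
  chi_squared_concentration_general P Z hZmeas hindep hlaw
end
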